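/- Let B be a smooth generalized Bayesian network and C a cutset of B. Then the underlying graph of the cutset Markov chain M_{B↑C} is a complete digraph, i.e., P(b,c) > 0 for all assignments b, c of C. -/

import Mathlib

open Filter
open scoped Classical

noncomputable section

namespace GBNPaper

variable {V : Type} [Fintype V] [DecidableEq V]

/-- A distribution over a finite type: nonnegative values summing to one. -/
def IsDist {α : Type} [Fintype α] (μ : α → ℝ) : Prop :=
  (∀ a, 0 ≤ μ a) ∧ ∑ a, μ a = 1

/-- The set of parents of a node `X` w.r.t. an edge set `E`. -/
def Pre (E : Finset (V × V)) (X : V) : Finset V :=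
  (E.filter fun e => e.2 = X).image Prod.fst

/-- The set of initial (parentless) nodes. -/
def InitSet (E : Finset (V × V)) : Finset V :=
  Finset.univ.filter fun X => Pre E X = ∅

/-- Assignments over a subset `U` of the nodes. -/
abbrev Asg (U : Finset V) : Type := {x // x ∈ U} → Bool

/-- A full assignment `b` agrees with a partial assignment `d` on `U`. -/
abbrev Agrees (b : V → Bool) (U : Finset V) (d : Asg U) : Prop :=
  ∀ x : {x // x ∈ U}, b x.1 = d x

/-- A generalized Bayesian network over node set `V`. -/
structure GBN (V : Type) [Fintype V] [DecidableEq V] where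
  /-- the directed edges -/
  edges : Finset (V × V)
  /-- CPT entries: the probability of `X = T` given an assignment of the parents of `X` -/
  cpt : (X : V) → Asg (Pre edges X) → ℝ
  cpt_nonneg : ∀ X b, 0 ≤ cpt X b
  cpt_le_one : ∀ X b, cpt X b ≤ 1
  /-- the initial distribution over assignments of the initial nodes -/
  ι : Asg (InitSet edges) → ℝ
  ι_dist : IsDist ι

/-- Probability of an event (set of full assignments) under `μ`. -/
def probIf (μ : (V → Bool) → ℝ) (p : (V → Bool) → Prop) : ℝ :=
  ∑ b : V → Bool, if p b then μ b else 0

/-- The marginal distribution of `μ` on `U`. -/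
def marginal (μ : (V → Bool) → ℝ) (U : Finset V) : Asg U → ℝ :=
  fun d => probIf μ fun b => Agrees b U d

/-- `Pr(X = v | parents as given by b)`. -/
def copyProb (B : GBN V) (X : V) (v : Bool) (b : V → Bool) : ℝ :=
  if v then B.cpt X (fun p => b p.1) else 1 - B.cpt X (fun p => b p.1)

/-- The standard BN semantics (chain rule) of a GBN. -/
def distBN (B : GBN V) (b : V → Bool) : ℝ :=
  B.ι (fun x => b x.1) *
    ∏ X ∈ Finset.univ \ InitSet B.edges, copyProb B X (b X) b

/-- The edge set contains no directed cycle. -/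
def Acyclic (E : Finset (V × V)) : Prop :=
  ∀ x : V, ¬ Relation.TransGen (fun a b => (a, b) ∈ E) x x

/-- `C` is a cutset: every directed cycle contains a node of `C`. -/
def IsCutset (E : Finset (V × V)) (C : Finset V) : Prop :=
  ∀ x : V, ¬ Relation.TransGen (fun a b => (a, b) ∈ E ∧ a ∉ C ∧ b ∉ C) x x

/-- The standard BN semantics of the `C`-dissected GBN `B↑C↑γ`, as a joint
distribution over assignments of the original nodes `V` together with
assignments of the copies `C'` of the cutset nodes. -/
def distDissect (B : GBN V) (C : Finset V) (γ : Asg C → ℝ)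
    (b : V → Bool) (c : Asg C) : ℝ :=
  B.ι (fun x => b x.1) * γ (fun x => b x.1) *
    (∏ X ∈ (Finset.univ \ InitSet B.edges) \ C, copyProb B X (b X) b) *
    ∏ Y ∈ C.attach, copyProb B Y.1 (c Y) b

/-- `Next(B,C,γ)`: restrict `dist_BN(B↑C↑γ)` to `(V∖C) ∪ C'` and re-identify
the copies with the original cutset nodes. -/
def Next (B : GBN V) (C : Finset V) (γ : Asg C → ℝ) (a : V → Bool) : ℝ :=
  ∑ b : V → Bool,
    if ∀ x : V, x ∉ C → b x = a x then distDissect B C γ b (fun y => a y.1) else 0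

/-- `Extend(B,C,γ) = dist_BN(B↑C↑γ)|_V`. -/
def Extend (B : GBN V) (C : Finset V) (γ : Asg C → ℝ) (a : V → Bool) : ℝ :=
  ∑ c : Asg C, distDissect B C γ a c

/-- Dirac (point) distribution. -/
def DiracD {α : Type} [DecidableEq α] (b : α) : α → ℝ := fun c => if c = b then 1 else 0

/-- Transition matrix of the cutset Markov chain `M_{B↑C}`:
`P(b,c) = Next(B,C,Dirac(b))|_C (c)`. -/
def cutsetP (B : GBN V) (C : Finset V) (b c : Asg C) : ℝ :=
  marginal (Next B C (DiracD b)) C c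

/-- Vector-matrix multiplication `γ·P`. -/
def vecMul {α : Type} [Fintype α] (γ : α → ℝ) (P : α → α → ℝ) : α → ℝ :=
  fun c => ∑ b, γ b * P b c

/-- The transient distributions `γ0·P^n`. -/
def matIter {α : Type} [Fintype α] (P : α → α → ℝ) (γ0 : α → ℝ) : ℕ → (α → ℝ)
  | 0 => γ0
  | n + 1 => vecMul (matIter P γ0 n) P

/-- The sequence `γ_{n+1} = Next(B,C,γ_n)|_C`. -/
def nextSeq (B : GBN V) (C : Finset V) (γ0 : Asg C → ℝ) : ℕ → (Asg C → ℝ)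
  | 0 => γ0
  | n + 1 => marginal (Next B C (nextSeq B C γ0 n)) C

/-- Cesàro averages of a sequence of vectors. -/
def cesaro {α : Type} (f : ℕ → α → ℝ) (n : ℕ) : α → ℝ :=
  fun a => (∑ i ∈ Finset.range (n + 1), f i a) / (n + 1)

/-- The Markov chain semantics `[B]_{MC-C}`: image of
`γ0 ↦ Extend(B,C,lrf^{γ0})` over all initial cutset distributions `γ0`,
where `lrf^{γ0}` is the Cesàro limit of the transient distributions. -/
def MCSem (B : GBN V) (C : Finset V) : Set ((V → Bool) → ℝ) :=
  { μ | ∃ γ0 γ, IsDist γ0 ∧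
      Tendsto (cesaro (matIter (cutsetP B C) γ0)) atTop (nhds γ) ∧
      μ = Extend B C γ }

/-- The limit semantics `[B]_{Lim-C}`. -/
def LimSem (B : GBN V) (C : Finset V) : Set ((V → Bool) → ℝ) :=
  { μ | ∃ γ0 γ, IsDist γ0 ∧
      Tendsto (nextSeq B C γ0) atTop (nhds γ) ∧
      μ = Extend B C γ }

/-- The limit average semantics `[B]_{LimAvg-C}`. -/
def LimAvgSem (B : GBN V) (C : Finset V) : Set ((V → Bool) → ℝ) :=
  { μ | ∃ γ0 γ, IsDist γ0 ∧
      Tendsto (cesaro (nextSeq B C γ0)) atTop (nhds γ) ∧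
      μ = Extend B C γ }

/-- The Markov chain semantics in stationary-distribution form:
`{ Extend(B,C,γ) : γ a distribution with γ = γ·P }`. -/
def MCStatSem (B : GBN V) (C : Finset V) : Set ((V → Bool) → ℝ) :=
  { μ | ∃ γ : Asg C → ℝ, IsDist γ ∧ γ = vecMul γ (cutsetP B C) ∧ μ = Extend B C γ }

/-- Strong CPT-consistency of `μ` for node `X`. -/
def StrongCPT (B : GBN V) (μ : (V → Bool) → ℝ) (X : V) : Prop :=
  ∀ c : Asg (Pre B.edges X),
    probIf μ (fun f => f X = true ∧ Agrees f (Pre B.edges X) c) =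
      probIf μ (fun f => Agrees f (Pre B.edges X) c) * B.cpt X c

/-- Weak CPT-consistency of `μ` for node `X`. -/
def WeakCPT (B : GBN V) (μ : (V → Bool) → ℝ) (X : V) : Prop :=
  probIf μ (fun f => f X = true) =
    ∑ c : Asg (Pre B.edges X),
      probIf μ (fun f => Agrees f (Pre B.edges X) c) * B.cpt X c

/-- The CPT semantics `[B]_{Cpt}`. -/
def CptSem (B : GBN V) : Set ((V → Bool) → ℝ) :=
  { μ | IsDist μ ∧ marginal μ (InitSet B.edges) = B.ι ∧
      ∀ X, X ∉ InitSet B.edges → StrongCPT B μ X }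

/-- `(X ⊥ Y | Z) ∈ Indep(μ)`. -/
def IndepTriple (μ : (V → Bool) → ℝ) (X Y Z : Finset V) : Prop :=
  ∀ (a : Asg X) (b : Asg Y) (c : Asg Z),
    probIf μ (fun f => Agrees f Y b ∧ Agrees f Z c) = 0 ∨
    probIf μ (fun f => Agrees f X a ∧ Agrees f Y b ∧ Agrees f Z c) /
        probIf μ (fun f => Agrees f Y b ∧ Agrees f Z c) =
      probIf μ (fun f => Agrees f X a ∧ Agrees f Z c) /
        probIf μ (fun f => Agrees f Z c)

def PairwiseDisjoint3 (X Y Z : Finset V) : Prop :=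
  Disjoint X Y ∧ Disjoint X Z ∧ Disjoint Y Z

/-- `Indep(μ)` as a set of triples. -/
def IndepSet (μ : (V → Bool) → ℝ) : Set (Finset V × Finset V × Finset V) :=
  { t | PairwiseDisjoint3 t.1 t.2.1 t.2.2 ∧ IndepTriple μ t.1 t.2.1 t.2.2 }

/-- The CPT-I semantics `[B]_{Cpt-I}`. -/
def CptISem (B : GBN V) (I : Set (Finset V × Finset V × Finset V)) :
    Set ((V → Bool) → ℝ) :=
  { μ | μ ∈ CptSem B ∧ I ⊆ IndepSet μ }

/-! d-separation -/

def Adjacent (E : Finset (V × V)) (x y : V) : Prop := (x, y) ∈ E ∨ (y, x) ∈ E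

/-- Reachability along directed edges (including the node itself). -/
def Reaches (E : Finset (V × V)) (x y : V) : Prop :=
  Relation.ReflTransGen (fun a b => (a, b) ∈ E) x y

/-- An intermediate triple `a, w, b` on a path blocks it given `Z`:
either `w ∈ Z` and `w` lies in a chain or a fork, or `w` lies in a collider
and no node reachable from `w` (including `w`) is in `Z`. -/
def BlockedTriple (E : Finset (V × V)) (Z : Finset V) (a w b : V) : Prop :=
  (w ∈ Z ∧ (((a, w) ∈ E ∧ (w, b) ∈ E) ∨ ((b, w) ∈ E ∧ (w, a) ∈ E) ∨
      ((w, a) ∈ E ∧ (w, b) ∈ E))) ∨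
  ((a, w) ∈ E ∧ (b, w) ∈ E ∧ ∀ d, Reaches E w d → d ∉ Z)

/-- A path (as a list of nodes) is blocked given `Z`. -/
def Blocked (E : Finset (V × V)) (Z : Finset V) (W : List V) : Prop :=
  ∃ l₁ a w b l₂, W = l₁ ++ a :: w :: b :: l₂ ∧ BlockedTriple E Z a w b

/-- `x` and `y` are d-separated given `Z`: every undirected simple path
from `x` to `y` is blocked given `Z`. -/
def DSepNodes (E : Finset (V × V)) (x y : V) (Z : Finset V) : Prop :=
  ∀ W : List V, W.Chain' (Adjacent E) → W.Nodup →
    W.head? = some x → W.getLast? = some y → Blocked E Z W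

def DSep (E : Finset (V × V)) (X Y Z : Finset V) : Prop :=
  ∀ x ∈ X, ∀ y ∈ Y, DSepNodes E x y Z

/-- `d-sep(G)` as a set of triples of pairwise disjoint node sets. -/
def DSepSet (E : Finset (V × V)) : Set (Finset V × Finset V × Finset V) :=
  { t | PairwiseDisjoint3 t.1 t.2.1 t.2.2 ∧ DSep E t.1 t.2.1 t.2.2 }

/-- `Close(G)`: add an edge between every ordered pair of distinct initial nodes. -/
def Close (E : Finset (V × V)) : Finset (V × V) :=
  E ∪ ((InitSet E ×ˢ InitSet E).filter fun p => p.1 ≠ p.2)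

/-- `G[C]`: remove all edges into nodes of `C` (so the nodes of `C` are initial). -/
def CutGraph (E : Finset (V × V)) (C : Finset V) : Finset (V × V) :=
  E.filter fun e => e.2 ∉ C

/-- `ι` is a product distribution: it factorizes into its single-node marginals,
i.e. the initial nodes are mutually independent under `ι`. -/
def IsProductDist {U : Finset V} (ι : Asg U → ℝ) : Prop :=
  ∀ b : Asg U,
    ι b = ∏ x : {x // x ∈ U}, ∑ b' : Asg U, if b' x = b x then ι b' else 0

/-! Markov chain notions -/

/-- Reachability in the underlying graph of a DTMC. -/
def MCReach {α : Type} (P : α → α → ℝ) (x y : α) : Prop :=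
  Relation.ReflTransGen (fun a b => 0 < P a b) x y

/-- Bottom strongly connected component of a DTMC: nonempty, closed under
reachability, and strongly connected. -/
def IsBSCC {α : Type} (P : α → α → ℝ) (D : Set α) : Prop :=
  D.Nonempty ∧ (∀ x ∈ D, ∀ y, MCReach P x y → y ∈ D) ∧
    ∀ x ∈ D, ∀ y ∈ D, MCReach P x y

/-- Walks of a given length along positive-probability transitions. -/
def walkLen {α : Type} (P : α → α → ℝ) : ℕ → α → α → Prop
  | 0, x, y => x = y
  | n + 1, x, y => ∃ z, 0 < P x z ∧ walkLen P n z y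

/-- The lengths of the cycles of `D`. -/
def CycleLens {α : Type} (P : α → α → ℝ) (D : Set α) : Set ℕ :=
  { n | 0 < n ∧ ∃ x ∈ D, walkLen P n x x }

/-- `D` is aperiodic: the gcd of the lengths of its cycles equals 1. -/
def AperiodicBSCC {α : Type} (P : α → α → ℝ) (D : Set α) : Prop :=
  ∀ d : ℕ, (∀ n ∈ CycleLens P D, d ∣ n) → d = 1

/-- `D` is periodic: the gcd of the lengths of its cycles is greater than 1. -/
def PeriodicBSCC {α : Type} (P : α → α → ℝ) (D : Set α) : Prop :=
  ∃ d : ℕ, 1 < d ∧ ∀ n ∈ CycleLens P D, d ∣ n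

/-- A GBN is smooth if all CPT entries and all values of `ι` lie in `(0,1)`. -/
def Smooth (B : GBN V) : Prop :=
  (∀ X b, B.cpt X b ∈ Set.Ioo (0 : ℝ) 1) ∧ ∀ d, B.ι d ∈ Set.Ioo (0 : ℝ) 1


/-!
Smoothness makes every factor of the chain rule of the dissected network positive, so
`Next(B, C, γ)` charges every assignment as soon as `γ` charges some cutset assignment.
Starting from `Dirac(b)`, every assignment, and hence every marginal value `c` on the cutset,
thus gets positive probability.
-/

def Asg.extend {U : Finset V} (d : Asg U) (a : V → Bool) : V → Bool :=
  fun x => if h : x ∈ U then d ⟨x, h⟩ else a x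

omit [Fintype V] in
lemma Asg.agrees_extend {U : Finset V} (d : Asg U) (a : V → Bool) :
    Agrees (d.extend a) U d := fun x => by simp [Asg.extend]

omit [Fintype V] in
lemma Asg.extend_of_notMem {U : Finset V} (d : Asg U) (a : V → Bool) {x : V} (hx : x ∉ U) :
    d.extend a x = a x := by
  simp [Asg.extend, hx]

lemma sum_ite_pos {α : Type} [Fintype α] {p : α → Prop} [DecidablePred p] {f : α → ℝ}
    (hf : ∀ a, p a → 0 ≤ f a) {a : α} (ha : p a) (hfa : 0 < f a) :
    0 < ∑ x, if p x then f x else 0 := by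
  refine Finset.sum_pos' (fun x _ => ?_) ⟨a, Finset.mem_univ a, by rwa [if_pos ha]⟩
  split_ifs with h
  exacts [hf x h, le_rfl]

lemma marginal_pos {μ : (V → Bool) → ℝ} (hμ : ∀ b, 0 < μ b) (U : Finset V) (d : Asg U) :
    0 < marginal μ U d := by
  unfold marginal probIf
  convert sum_ite_pos (p := fun b => Agrees b U d) (fun b _ => (hμ b).le)
    (d.agrees_extend fun _ => false) (hμ _)

lemma DiracD_nonneg {α : Type} [DecidableEq α] (b c : α) : 0 ≤ DiracD b c := by
  unfold DiracD; split_ifs <;> norm_num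

lemma DiracD_self {α : Type} [DecidableEq α] (b : α) : DiracD b b = 1 := if_pos rfl

lemma copyProb_nonneg (B : GBN V) (X : V) (v : Bool) (b : V → Bool) :
    0 ≤ copyProb B X v b := by
  have h0 := B.cpt_nonneg X (fun p => b p.1)
  have h1 := B.cpt_le_one X (fun p => b p.1)
  cases v <;> simp only [copyProb, Bool.false_eq_true, ↓reduceIte] <;> linarith

lemma copyProb_pos {B : GBN V} (hs : Smooth B) (X : V) (v : Bool) (b : V → Bool) :
    0 < copyProb B X v b := by
  obtain ⟨h0, h1⟩ := hs.1 X (fun p => b p.1)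
  cases v <;> simp only [copyProb, Bool.false_eq_true, ↓reduceIte] <;> linarith

lemma distDissect_nonneg (B : GBN V) (C : Finset V) {γ : Asg C → ℝ} (hγ : ∀ d, 0 ≤ γ d)
    (b : V → Bool) (c : Asg C) : 0 ≤ distDissect B C γ b c := by
  unfold distDissect
  have hι := B.ι_dist.1 (fun x => b x.1)
  have hprod₁ := Finset.prod_nonneg fun X (_ : X ∈ (Finset.univ \ InitSet B.edges) \ C) =>
    copyProb_nonneg B X (b X) b
  have hprod₂ := Finset.prod_nonneg fun Y (_ : Y ∈ C.attach) => copyProb_nonneg B Y.1 (c Y) b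
  have := hγ (fun x => b x.1)
  positivity

lemma distDissect_pos {B : GBN V} (hs : Smooth B) (C : Finset V) {γ : Asg C → ℝ}
    {b : V → Bool} (hγ : 0 < γ (fun x => b x.1)) (c : Asg C) :
    0 < distDissect B C γ b c := by
  unfold distDissect
  have hι := (hs.2 (fun x => b x.1)).1
  have hprod₁ := Finset.prod_pos fun X (_ : X ∈ (Finset.univ \ InitSet B.edges) \ C) =>
    copyProb_pos hs X (b X) b
  have hprod₂ := Finset.prod_pos fun Y (_ : Y ∈ C.attach) => copyProb_pos hs Y.1 (c Y) b
  positivity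

lemma Next_pos {B : GBN V} (hs : Smooth B) (C : Finset V) {γ : Asg C → ℝ}
    (hγ : ∀ d, 0 ≤ γ d) {d : Asg C} (hd : 0 < γ d) (a : V → Bool) :
    0 < Next B C γ a := by
  have hrestrict : (fun x : {x // x ∈ C} => d.extend a x.1) = d :=
    funext (d.agrees_extend a)
  refine sum_ite_pos (fun b _ => distDissect_nonneg B C hγ b _)
    (fun x hx => d.extend_of_notMem a hx) (distDissect_pos hs C ?_ _)
  rwa [hrestrict]

lemma cutsetP_pos {B : GBN V} (hs : Smooth B) (C : Finset V) (b c : Asg C) :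
    0 < cutsetP B C b c :=
  marginal_pos (Next_pos hs C (DiracD_nonneg b) (DiracD_self b ▸ one_pos)) C c

theorem stmt11_general {V : Type} [Fintype V] [DecidableEq V]
    (B : GBN V) (hs : Smooth B) (C : Finset V) :
    ∀ b c : Asg C, 0 < cutsetP B C b c :=
  cutsetP_pos hs C

/-- For a smooth GBN `B` and cutset `C`, the underlying graph of
the cutset Markov chain is a complete digraph: `P(b,c) > 0` for all cutset
assignments `b, c`. -/
theorem stmt11 {V : Type} [Fintype V] [DecidableEq V]
    (B : GBN V) (hs : Smooth B) (C : Finset V) (hC : IsCutset B.edges C) :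
    ∀ b c : Asg C, 0 < cutsetP B C b c :=
  stmt11_general B hs C

end GBNPaper
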